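/- arXiv:1512.09185 — 2 statements merged into one kernel-verified Lean document; each statement's English description precedes it below -/
import Mathlib

section
/- Let G be a δ-hyperbolic group with finite generating set and H a K-quasiconvex subgroup. Then the number of double cosets H g H whose shortest representative has length at most 2K + 2δ is finite, and consequently there is a finite bound N such that any collection of elements g₁, ..., g_n in pairwise distinct double cosets of H with H ∩ g_i⁻¹ H g_i infinite for all i satisfies n ≤ N. (Quasiconvex subgroups of hyperbolic groups have finite weak width.) -/
section WordMetric

variable {G : Type*} [Group G]

/-- The word length of `g` with respect to a generating set `S`: the least length
of a word in the generators (elements of `S`) whose product is `g`. -/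
noncomputable def wlen (S : Set G) (g : G) : ℕ :=
  sInf {n : ℕ | ∃ l : List G, (∀ s ∈ l, s ∈ S) ∧ l.length = n ∧ l.prod = g}

/-- The word metric on the Cayley graph of `G` with respect to `S`. -/
noncomputable def wdist (S : Set G) (g h : G) : ℕ := wlen S (g⁻¹ * h)

/-- `l` is a geodesic word: its letters lie in `S` and it has minimal length among
all words in `S` with the same product. -/
def IsGeodesicWord (S : Set G) (l : List G) : Prop :=
  (∀ s ∈ l, s ∈ S) ∧ l.length = wlen S l.prod

/-- The vertices visited by the path starting at `g` and reading the word `l`. -/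
def pathVertices (g : G) (l : List G) : Set G :=
  {v | ∃ i ≤ l.length, v = g * (l.take i).prod}

/-- `H` is `K`-quasiconvex with respect to `S`: every vertex of a geodesic in the
Cayley graph joining two elements of `H` lies within distance `K` of `H`. -/
def IsQuasiconvex (S : Set G) (H : Subgroup G) (K : ℝ) : Prop :=
  ∀ g : G, g ∈ H → ∀ l : List G, IsGeodesicWord S l → g * l.prod ∈ H →
    ∀ v ∈ pathVertices g l, ∃ h ∈ H, (wdist S v h : ℝ) ≤ K

/-- The Cayley graph of `G` with respect to `S` is `δ`-hyperbolic: every geodesic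
triangle is `δ`-thin, i.e. each side lies in the `δ`-neighborhood of the union of
the other two sides. -/
def IsHyperbolic (S : Set G) (δ : ℝ) : Prop :=
  ∀ (a b c : G) (l₁ l₂ l₃ : List G),
    IsGeodesicWord S l₁ → IsGeodesicWord S l₂ → IsGeodesicWord S l₃ →
    a * l₁.prod = b → b * l₂.prod = c → a * l₃.prod = c →
    ∀ v ∈ pathVertices a l₃,
      ∃ u ∈ pathVertices a l₁ ∪ pathVertices b l₂, (wdist S u v : ℝ) ≤ δ

end WordMetric

/-!
Word-metric balls are finite, so only finitely many double cosets meet the ball of radius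
`2K + 2δ`; it remains to show that `HgH` meets it whenever `H ∩ g⁻¹Hg` is infinite. Such an
intersection contains some `h = g⁻¹h'g` much longer than `g`. In the quadrilateral
`1, g, gh = h'g, h'` the sides at `g` and `h'` have length `|g|`, so thinness of the two triangles
cut out by the diagonal `[1, gh]` puts a vertex `gm` of `[g, gh]` far from both ends within `2δ`
of `[1, h']`. Quasiconvexity of `H` along `[1, h']` and `[1, h]` gives `h₀, h₁ ∈ H` with
`d(gm, h₀) ≤ K + 2δ` and `d(m, h₁) ≤ K`, so `h₀⁻¹gh₁ ∈ HgH` has length at most `2K + 2δ`.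
-/

open DoubleCoset

section WordLength

variable {G : Type*} [Group G] {S : Set G}

lemma wlen_prod_le_length {l : List G} (hl : ∀ s ∈ l, s ∈ S) : wlen S l.prod ≤ l.length :=
  Nat.sInf_le ⟨l, hl, rfl, rfl⟩

lemma wlen_one : wlen S (1 : G) = 0 :=
  Nat.le_zero.1 (wlen_prod_le_length (l := []) (by simp))

lemma exists_word_prod_eq (hSsymm : ∀ s ∈ S, s⁻¹ ∈ S) (hSgen : Subgroup.closure S = ⊤)
    (g : G) : ∃ l : List G, (∀ s ∈ l, s ∈ S) ∧ l.prod = g := by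
  have hS : S ∪ S⁻¹ = S := Set.union_eq_self_of_subset_right fun s hs => by
    simpa using hSsymm _ hs
  have hg : g ∈ (Subgroup.closure S).toSubmonoid := by simp [hSgen]
  rw [Subgroup.closure_toSubmonoid, hS] at hg
  exact Submonoid.exists_list_of_mem_closure hg

lemma exists_word_length_eq_wlen (hSsymm : ∀ s ∈ S, s⁻¹ ∈ S)
    (hSgen : Subgroup.closure S = ⊤) (g : G) :
    ∃ l : List G, (∀ s ∈ l, s ∈ S) ∧ l.length = wlen S g ∧ l.prod = g := by
  obtain ⟨l, hl, rfl⟩ := exists_word_prod_eq hSsymm hSgen g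
  exact Nat.sInf_mem (s := {n | ∃ l' : List G, (∀ s ∈ l', s ∈ S) ∧ l'.length = n ∧
    l'.prod = l.prod}) ⟨l.length, l, hl, rfl, rfl⟩

lemma exists_isGeodesicWord_prod_eq (hSsymm : ∀ s ∈ S, s⁻¹ ∈ S)
    (hSgen : Subgroup.closure S = ⊤) (g : G) :
    ∃ l : List G, IsGeodesicWord S l ∧ l.prod = g := by
  obtain ⟨l, hl, hlen, rfl⟩ := exists_word_length_eq_wlen hSsymm hSgen g
  exact ⟨l, ⟨hl, hlen⟩, rfl⟩

lemma wlen_mul_le (hSsymm : ∀ s ∈ S, s⁻¹ ∈ S) (hSgen : Subgroup.closure S = ⊤) (a b : G) :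
    wlen S (a * b) ≤ wlen S a + wlen S b := by
  obtain ⟨la, hla, hlena, rfl⟩ := exists_word_length_eq_wlen hSsymm hSgen a
  obtain ⟨lb, hlb, hlenb, rfl⟩ := exists_word_length_eq_wlen hSsymm hSgen b
  have hl : ∀ s ∈ la ++ lb, s ∈ S := by simpa [or_imp, forall_and] using ⟨hla, hlb⟩
  simpa [hlena, hlenb] using wlen_prod_le_length hl

lemma wlen_inv (hSsymm : ∀ s ∈ S, s⁻¹ ∈ S) (hSgen : Subgroup.closure S = ⊤) (g : G) :
    wlen S g⁻¹ = wlen S g := by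
  have hle : ∀ x : G, wlen S x⁻¹ ≤ wlen S x := fun x => by
    obtain ⟨l, hl, hlen, rfl⟩ := exists_word_length_eq_wlen hSsymm hSgen x
    have hl' : ∀ s ∈ (l.map (·⁻¹)).reverse, s ∈ S := fun s hs => by
      rw [← inv_inv s]
      exact hSsymm _ (hl _ (by simpa using hs))
    simpa [← List.prod_inv_reverse, hlen] using wlen_prod_le_length hl'
  exact le_antisymm (hle g) (by simpa using hle g⁻¹)

lemma finite_setOf_wlen_le (hSfin : S.Finite) (hSsymm : ∀ s ∈ S, s⁻¹ ∈ S)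
    (hSgen : Subgroup.closure S = ⊤) (n : ℕ) : {g : G | wlen S g ≤ n}.Finite := by
  have : Finite S := hSfin.to_subtype
  refine ((List.finite_length_le S n).image fun l => (l.map (↑)).prod).subset fun g hg => ?_
  obtain ⟨l, hl, hlen, rfl⟩ := exists_word_length_eq_wlen hSsymm hSgen g
  have hln : l.length ≤ n := hlen ▸ hg
  lift l to List S using hl
  exact ⟨l, by simpa using hln, rfl⟩

lemma Set.Infinite.exists_lt_wlen (hSfin : S.Finite) (hSsymm : ∀ s ∈ S, s⁻¹ ∈ S)
    (hSgen : Subgroup.closure S = ⊤) {T : Set G} (hT : T.Infinite) (n : ℕ) :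
    ∃ x ∈ T, n < wlen S x := by
  obtain ⟨x, hxT, hx⟩ := hT.exists_notMem_finite (finite_setOf_wlen_le hSfin hSsymm hSgen n)
  exact ⟨x, hxT, not_le.1 hx⟩

end WordLength

section CayleyPaths

variable {G : Type*} [Group G] {S : Set G}

lemma wdist_comm (hSsymm : ∀ s ∈ S, s⁻¹ ∈ S) (hSgen : Subgroup.closure S = ⊤) (a b : G) :
    wdist S a b = wdist S b a := by
  rw [wdist, ← wlen_inv hSsymm hSgen, wdist, mul_inv_rev, inv_inv]

lemma wdist_triangle (hSsymm : ∀ s ∈ S, s⁻¹ ∈ S) (hSgen : Subgroup.closure S = ⊤) (a b c : G) :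
    wdist S a c ≤ wdist S a b + wdist S b c := by
  simpa [wdist, mul_assoc] using wlen_mul_le hSsymm hSgen (a⁻¹ * b) (b⁻¹ * c)

lemma wdist_take_prod (a : G) (l : List G) (i : ℕ) :
    wdist S a (a * (l.take i).prod) = wlen S (l.take i).prod := by
  simp [wdist]

lemma wdist_take_prod_prod (a : G) (l : List G) (i : ℕ) :
    wdist S (a * (l.take i).prod) (a * l.prod) = wlen S (l.drop i).prod := by
  rw [wdist, ← List.take_append_drop i l, List.prod_append, List.take_append_drop]
  group

lemma wdist_left_le_length_of_mem_pathVertices {a v : G} {l : List G} (hl : ∀ s ∈ l, s ∈ S)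
    (hv : v ∈ pathVertices a l) : wdist S a v ≤ l.length := by
  obtain ⟨i, -, rfl⟩ := hv
  rw [wdist_take_prod]
  exact (wlen_prod_le_length fun s hs => hl s (List.mem_of_mem_take hs)).trans
    (List.length_take_le' i l)

lemma wdist_right_le_length_of_mem_pathVertices {a v : G} {l : List G} (hl : ∀ s ∈ l, s ∈ S)
    (hv : v ∈ pathVertices a l) : wdist S v (a * l.prod) ≤ l.length := by
  obtain ⟨i, -, rfl⟩ := hv
  rw [wdist_take_prod_prod]
  exact (wlen_prod_le_length fun s hs => hl s (List.mem_of_mem_drop hs)).trans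
    (by simp)

lemma IsGeodesicWord.wdist_take_prod_eq (hSsymm : ∀ s ∈ S, s⁻¹ ∈ S)
    (hSgen : Subgroup.closure S = ⊤) {l : List G} (hl : IsGeodesicWord S l) (a : G) {i : ℕ}
    (hi : i ≤ l.length) :
    wdist S a (a * (l.take i).prod) = i ∧
      wdist S (a * (l.take i).prod) (a * l.prod) = l.length - i := by
  have h₁ : wdist S a (a * (l.take i).prod) ≤ i := by
    rw [wdist_take_prod]
    exact (wlen_prod_le_length fun s hs => hl.1 s (List.mem_of_mem_take hs)).trans
      (List.length_take_le i l)
  have h₂ : wdist S (a * (l.take i).prod) (a * l.prod) ≤ l.length - i := by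
    rw [wdist_take_prod_prod, ← List.length_drop]
    exact wlen_prod_le_length fun s hs => hl.1 s (List.mem_of_mem_drop hs)
  have h₃ := wdist_triangle hSsymm hSgen a (a * (l.take i).prod) (a * l.prod)
  rw [show wdist S a (a * l.prod) = l.length by simp [wdist, hl.2]] at h₃
  omega

end CayleyPaths

section Hyperbolic

variable {G : Type*} [Group G] {S : Set G} {δ : ℝ}

lemma IsHyperbolic.nonneg (hhyp : IsHyperbolic S δ) : 0 ≤ δ := by
  have hgeo : IsGeodesicWord S ([] : List G) := ⟨by simp, by simp [wlen_one]⟩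
  obtain ⟨u, -, hu⟩ := hhyp 1 1 1 [] [] [] hgeo hgeo hgeo (by simp) (by simp) (by simp) 1
    ⟨0, le_rfl, by simp⟩
  exact (Nat.cast_nonneg _).trans hu

lemma IsHyperbolic.exists_near_second_side (hhyp : IsHyperbolic S δ)
    (hSsymm : ∀ s ∈ S, s⁻¹ ∈ S) (hSgen : Subgroup.closure S = ⊤) {a b c v : G}
    {l₁ l₂ l₃ : List G} (h₁ : IsGeodesicWord S l₁) (h₂ : IsGeodesicWord S l₂)
    (h₃ : IsGeodesicWord S l₃) (hab : a * l₁.prod = b) (hbc : b * l₂.prod = c)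
    (hac : a * l₃.prod = c) (hv : v ∈ pathVertices a l₃) (hfar : l₁.length + δ < wdist S a v) :
    ∃ u ∈ pathVertices b l₂, (wdist S u v : ℝ) ≤ δ := by
  obtain ⟨u, hu | hu, huv⟩ := hhyp a b c l₁ l₂ l₃ h₁ h₂ h₃ hab hbc hac v hv
  · have hau : (wdist S a u : ℝ) ≤ l₁.length := by
      exact_mod_cast wdist_left_le_length_of_mem_pathVertices h₁.1 hu
    have hauv : (wdist S a v : ℝ) ≤ wdist S a u + wdist S u v := by
      exact_mod_cast wdist_triangle hSsymm hSgen a u v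
    linarith
  · exact ⟨u, hu, huv⟩

lemma IsHyperbolic.exists_near_first_side (hhyp : IsHyperbolic S δ)
    (hSsymm : ∀ s ∈ S, s⁻¹ ∈ S) (hSgen : Subgroup.closure S = ⊤) {a b c v : G}
    {l₁ l₂ l₃ : List G} (h₁ : IsGeodesicWord S l₁) (h₂ : IsGeodesicWord S l₂)
    (h₃ : IsGeodesicWord S l₃) (hab : a * l₁.prod = b) (hbc : b * l₂.prod = c)
    (hac : a * l₃.prod = c) (hv : v ∈ pathVertices a l₃) (hfar : l₂.length + δ < wdist S v c) :
    ∃ u ∈ pathVertices a l₁, (wdist S u v : ℝ) ≤ δ := by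
  obtain ⟨u, hu | hu, huv⟩ := hhyp a b c l₁ l₂ l₃ h₁ h₂ h₃ hab hbc hac v hv
  · exact ⟨u, hu, huv⟩
  · have huc : (wdist S u c : ℝ) ≤ l₂.length := by
      rw [← hbc]
      exact_mod_cast wdist_right_le_length_of_mem_pathVertices h₂.1 hu
    have hvuc : (wdist S v c : ℝ) ≤ wdist S v u + wdist S u c := by
      exact_mod_cast wdist_triangle hSsymm hSgen v u c
    rw [wdist_comm hSsymm hSgen v u] at hvuc
    linarith

/-- `1, g, g * x = y * g, y` is a quadrilateral whose sides at `g` and at `y` have length `|g|`;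
the diagonal `[1, g * x]` cuts it into two `δ`-thin triangles. -/
lemma IsHyperbolic.exists_near_of_mul_eq_mul (hhyp : IsHyperbolic S δ)
    (hSsymm : ∀ s ∈ S, s⁻¹ ∈ S) (hSgen : Subgroup.closure S = ⊤) {g x y v : G}
    (hxy : y * g = g * x) {l m : List G} (hl : IsGeodesicWord S l) (hlx : l.prod = x)
    (hm : IsGeodesicWord S m) (hmy : m.prod = y) (hv : v ∈ pathVertices g l)
    (hstart : wlen S g + 2 * δ < wdist S g v) (hend : wlen S g + 2 * δ < wdist S v (g * x)) :
    ∃ w ∈ pathVertices 1 m, (wdist S v w : ℝ) ≤ 2 * δ := by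
  have hδ := hhyp.nonneg
  obtain ⟨lgi, hlgi, hlgi_prod⟩ := exists_isGeodesicWord_prod_eq hSsymm hSgen g⁻¹
  obtain ⟨lg, hlg, hlg_prod⟩ := exists_isGeodesicWord_prod_eq hSsymm hSgen g
  obtain ⟨ld, hld, hld_prod⟩ := exists_isGeodesicWord_prod_eq hSsymm hSgen (g * x)
  have hlgi_len : lgi.length = wlen S g := by rw [hlgi.2, hlgi_prod, wlen_inv hSsymm hSgen]
  have hlg_len : lg.length = wlen S g := by rw [hlg.2, hlg_prod]
  obtain ⟨u, hu, huv⟩ := hhyp.exists_near_second_side hSsymm hSgen (b := 1) (c := g * x)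
    hlgi hld hl (by simp [hlgi_prod]) (by simp [hld_prod]) (by rw [hlx]) hv
    (by rw [hlgi_len]; linarith)
  have hvu : (wdist S v (g * x) : ℝ) ≤ wdist S v u + wdist S u (g * x) := by
    exact_mod_cast wdist_triangle hSsymm hSgen v u (g * x)
  rw [wdist_comm hSsymm hSgen v u] at hvu
  obtain ⟨w, hw, hwu⟩ := hhyp.exists_near_first_side hSsymm hSgen (a := 1) (b := y)
    (c := g * x) hm hlg hld (by simp [hmy]) (by rw [hlg_prod, hxy]) (by simp [hld_prod]) hu
    (by rw [hlg_len]; linarith)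
  have hvw : (wdist S v w : ℝ) ≤ wdist S v u + wdist S u w := by
    exact_mod_cast wdist_triangle hSsymm hSgen v u w
  rw [wdist_comm hSsymm hSgen v u, wdist_comm hSsymm hSgen u w] at hvw
  exact ⟨w, hw, by linarith⟩

end Hyperbolic

section DoubleCoset

variable {G : Type*} [Group G] {S : Set G}

lemma setOf_eq_doubleCoset (H : Subgroup G) (g : G) :
    {y : G | ∃ a ∈ H, ∃ b ∈ H, y = a * g * b} = doubleCoset g H H :=
  Set.ext fun _ => mem_doubleCoset.symm

lemma finite_setOf_doubleCoset_wlen_le (hSfin : S.Finite) (hSsymm : ∀ s ∈ S, s⁻¹ ∈ S)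
    (hSgen : Subgroup.closure S = ⊤) (H : Subgroup G) (r : ℝ) :
    {D : Set G | (∃ g, D = doubleCoset g H H) ∧ ∃ x ∈ D, (wlen S x : ℝ) ≤ r}.Finite := by
  refine ((finite_setOf_wlen_le hSfin hSsymm hSgen ⌊r⌋₊).image
    fun x => doubleCoset x H H).subset ?_
  rintro _ ⟨⟨g, rfl⟩, x, hx, hxr⟩
  exact ⟨x, Nat.le_floor hxr, doubleCoset_eq_of_mem hx⟩

lemma exists_mem_doubleCoset_wlen_le (hSsymm : ∀ s ∈ S, s⁻¹ ∈ S)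
    (hSgen : Subgroup.closure S = ⊤) {H : Subgroup G} {g m h₀ h₁ : G} (h₀H : h₀ ∈ H)
    (h₁H : h₁ ∈ H) {r t : ℝ} (hr : wdist S h₀ (g * m) ≤ r) (ht : wdist S m h₁ ≤ t) :
    ∃ x ∈ doubleCoset g H H, (wlen S x : ℝ) ≤ r + t := by
  refine ⟨h₀⁻¹ * g * h₁, mem_doubleCoset.2 ⟨h₀⁻¹, inv_mem h₀H, h₁, h₁H, rfl⟩, ?_⟩
  have hx : wlen S (h₀⁻¹ * g * h₁) ≤ wdist S h₀ (g * m) + wdist S m h₁ := by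
    simpa [wdist, mul_assoc] using wdist_triangle hSsymm hSgen h₀ (g * m) (g * h₁)
  calc (wlen S (h₀⁻¹ * g * h₁) : ℝ) ≤ wdist S h₀ (g * m) + wdist S m h₁ := by exact_mod_cast hx
    _ ≤ r + t := add_le_add hr ht

lemma exists_mem_doubleCoset_wlen_le_of_infinite (hSfin : S.Finite)
    (hSsymm : ∀ s ∈ S, s⁻¹ ∈ S) (hSgen : Subgroup.closure S = ⊤) {δ K : ℝ}
    (hhyp : IsHyperbolic S δ) {H : Subgroup G} (hqc : IsQuasiconvex S H K) {g : G}
    (hinf : ((H : Set G) ∩ ((fun y => g⁻¹ * y * g) '' (H : Set G))).Infinite) :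
    ∃ x ∈ doubleCoset g H H, (wlen S x : ℝ) ≤ 2 * K + 2 * δ := by
  obtain ⟨i, hi⟩ := exists_nat_gt ((wlen S g : ℝ) + 2 * δ)
  obtain ⟨_, ⟨hH, h', h'H, rfl⟩, hlong⟩ := hinf.exists_lt_wlen hSfin hSsymm hSgen (2 * i)
  dsimp only at hH hlong
  obtain ⟨l, hl, hl_prod⟩ := exists_isGeodesicWord_prod_eq hSsymm hSgen (g⁻¹ * h' * g)
  obtain ⟨m, hm, hm_prod⟩ := exists_isGeodesicWord_prod_eq hSsymm hSgen h'
  have hil : 2 * i ≤ l.length := by rw [hl.2, hl_prod]; exact hlong.le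
  obtain ⟨hstart, hend⟩ := hl.wdist_take_prod_eq hSsymm hSgen g (i := i) (by omega)
  rw [hl_prod] at hend
  obtain ⟨w, hw, hvw⟩ := hhyp.exists_near_of_mul_eq_mul hSsymm hSgen (g := g)
    (x := g⁻¹ * h' * g) (by group) hl hl_prod hm hm_prod ⟨i, by omega, rfl⟩
    (by rw [hstart]; exact hi)
    (by rw [hend]; exact hi.trans_le (by exact_mod_cast (by omega : i ≤ l.length - i)))
  obtain ⟨h₀, h₀H, hwh₀⟩ := hqc 1 H.one_mem m hm (by simpa [hm_prod]) w hw
  obtain ⟨h₁, h₁H, hh₁⟩ := hqc 1 H.one_mem l hl (by simpa [hl_prod] using hH) _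
    ⟨i, by omega, rfl⟩
  have hvh₀ : (wdist S (g * (l.take i).prod) h₀ : ℝ) ≤ wdist S (g * (l.take i).prod) w +
      wdist S w h₀ := by
    exact_mod_cast wdist_triangle hSsymm hSgen _ w h₀
  rw [wdist_comm hSsymm hSgen] at hvh₀
  obtain ⟨x, hx, hxlen⟩ := exists_mem_doubleCoset_wlen_le hSsymm hSgen h₀H h₁H
    (r := K + 2 * δ) (by linarith) (by simpa using hh₁)
  exact ⟨x, hx, by linarith⟩

end DoubleCoset

theorem finite_weak_width_general {G : Type*} [Group G]
    (S : Set G) (hSfin : S.Finite) (hSsymm : ∀ s ∈ S, s⁻¹ ∈ S)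
    (hSgen : Subgroup.closure S = ⊤)
    (δ K : ℝ)
    (hhyp : IsHyperbolic S δ) (H : Subgroup G) (hqc : IsQuasiconvex S H K) :
    {D : Set G | (∃ g : G, D = {y : G | ∃ a ∈ H, ∃ b ∈ H, y = a * g * b}) ∧
        ∃ x ∈ D, (wlen S x : ℝ) ≤ 2 * K + 2 * δ}.Finite ∧
      ∃ N : ℕ, ∀ (n : ℕ) (g : Fin n → G),
        (∀ i j, i ≠ j →
          {y : G | ∃ a ∈ H, ∃ b ∈ H, y = a * g i * b} ≠
            {y : G | ∃ a ∈ H, ∃ b ∈ H, y = a * g j * b}) →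
        (∀ i, ((H : Set G) ∩
          ((fun y => (g i)⁻¹ * y * g i) '' (H : Set G))).Infinite) →
        n ≤ N := by
  simp only [setOf_eq_doubleCoset]
  have hT := finite_setOf_doubleCoset_wlen_le hSfin hSsymm hSgen H (2 * K + 2 * δ)
  refine ⟨hT, hT.toFinset.card, fun n g hdist hinf => ?_⟩
  have hshort : ∀ i, doubleCoset (g i) H H ∈ hT.toFinset := fun i => by
    obtain ⟨x, hx, hxlen⟩ :=
      exists_mem_doubleCoset_wlen_le_of_infinite hSfin hSsymm hSgen hhyp hqc (hinf i)
    exact hT.mem_toFinset.2 ⟨⟨g i, rfl⟩, x, hx, hxlen⟩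
  simpa using Finset.card_le_card_of_injOn (s := Finset.univ) (fun i => doubleCoset (g i) H H)
    (fun i _ => hshort i) fun i _ j _ hij => by_contra fun hne => hdist i j hne hij

theorem finite_weak_width {G : Type*} [Group G]
    (S : Set G) (hSfin : S.Finite) (hSsymm : ∀ s ∈ S, s⁻¹ ∈ S)
    (hSgen : Subgroup.closure S = ⊤)
    (δ K : ℝ) (hδ : 0 ≤ δ) (hK : 0 ≤ K)
    (hhyp : IsHyperbolic S δ) (H : Subgroup G) (hqc : IsQuasiconvex S H K) :
    {D : Set G | (∃ g : G, D = {y : G | ∃ a ∈ H, ∃ b ∈ H, y = a * g * b}) ∧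
        ∃ x ∈ D, (wlen S x : ℝ) ≤ 2 * K + 2 * δ}.Finite ∧
      ∃ N : ℕ, ∀ (n : ℕ) (g : Fin n → G),
        (∀ i j, i ≠ j →
          {y : G | ∃ a ∈ H, ∃ b ∈ H, y = a * g i * b} ≠
            {y : G | ∃ a ∈ H, ∃ b ∈ H, y = a * g j * b}) →
        (∀ i, ((H : Set G) ∩
          ((fun y => (g i)⁻¹ * y * g i) '' (H : Set G))).Infinite) →
        n ≤ N :=
  finite_weak_width_general S hSfin hSsymm hSgen δ K hhyp H hqc
end

section
/- Let F be the free group on x₁, x₂, x₃, x₄ with the ℤ/4-action cyclically permuting generators, G = F ⋊ ℤ/4 with generator t of ℤ/4, and H₁ = ⟨x₁, x₂⟩ ≤ G. Then for every r ∈ F, the intersection H₁ ∩ (r t²)⁻¹ H₁ (r t²) is trivial. -/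
/-!
STATEMENT 17: With `F` free on `x₁,…,x₄`, `G = F ⋊ ℤ/4` (`t` cyclically
permuting the generators) and `H₁ = ⟨x₁, x₂⟩ ≤ G`, for every `r ∈ F` the
intersection `H₁ ∩ (r t²)⁻¹ H₁ (r t²)` is trivial.
-/

noncomputable section

def sigma : MulAut (FreeGroup (Fin 4)) := FreeGroup.freeGroupCongr (finRotate 4)

lemma sigma_pow_four : sigma ^ 4 = 1 := by
  have h4 : ∀ i : Fin 4, finRotate 4 (finRotate 4 (finRotate 4 (finRotate 4 i))) = i := by
    decide
  ext z
  show sigma (sigma (sigma (sigma z))) = z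
  induction z using FreeGroup.induction_on with
  | C1 => simp [sigma]
  | of i =>
      show sigma (sigma (sigma (sigma (FreeGroup.of i)))) = FreeGroup.of i
      simp only [sigma, FreeGroup.freeGroupCongr_apply, FreeGroup.map.of, h4]
  | inv_of i ih => rw [_root_.map_inv, _root_.map_inv, _root_.map_inv, _root_.map_inv, ih]
  | mul a b iha ihb =>
      rw [_root_.map_mul, _root_.map_mul, _root_.map_mul, _root_.map_mul, iha, ihb]

def phi : Multiplicative (ZMod 4) →* MulAut (FreeGroup (Fin 4)) where
  toFun k := sigma ^ (Multiplicative.toAdd k).val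
  map_one' := by simp
  map_mul' a b := by
    try simp only []
    rw [toAdd_mul, ZMod.val_add, ← pow_eq_pow_mod _ sigma_pow_four, pow_add]

abbrev G := SemidirectProduct (FreeGroup (Fin 4)) (Multiplicative (ZMod 4)) phi

def t : G := SemidirectProduct.inr (Multiplicative.ofAdd 1)
def x (i : Fin 4) : G := SemidirectProduct.inl (FreeGroup.of i)

noncomputable section

def H₁ : Subgroup G := Subgroup.closure {x 0, x 1}

def K : Subgroup (FreeGroup (Fin 4)) := Subgroup.closure {FreeGroup.of 0, FreeGroup.of 1}

def ι : FreeGroup (Fin 2) →* FreeGroup (Fin 4) :=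
  FreeGroup.lift ![FreeGroup.of 0, FreeGroup.of 1]

def f : FreeGroup (Fin 4) →* FreeGroup (Fin 2) :=
  FreeGroup.lift ![FreeGroup.of 0, FreeGroup.of 1, 1, 1]

lemma f_ι (z : FreeGroup (Fin 2)) : f (ι z) = z := by
  have : f.comp ι = MonoidHom.id _ := by
    apply FreeGroup.ext_hom
    intro i
    fin_cases i <;> (simp [f, ι])
  calc f (ι z) = (f.comp ι) z := rfl
    _ = z := by rw [this]; rfl

lemma K_le_range : K ≤ ι.range := by
  rw [K, Subgroup.closure_le]
  rintro v (rfl | rfl)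
  · exact ⟨FreeGroup.of 0, by simp [ι]⟩
  · exact ⟨FreeGroup.of 1, by simp [ι]⟩

lemma K_inj {v : FreeGroup (Fin 4)} (hv : v ∈ K) (h1 : f v = 1) : v = 1 := by
  obtain ⟨z, rfl⟩ := K_le_range hv
  rw [f_ι] at h1
  rw [h1, map_one]

end


def s4 : Multiplicative (ZMod 4) := (Multiplicative.ofAdd (1:ZMod 4))^2

lemma phi_s4_inv_of0 : phi s4⁻¹ (FreeGroup.of 0) = FreeGroup.of 2 := by
  have hv : (Multiplicative.toAdd s4⁻¹).val = 2 := by decide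
  show (sigma ^ (Multiplicative.toAdd s4⁻¹).val) (FreeGroup.of 0) = FreeGroup.of 2
  rw [hv]
  show sigma (sigma (FreeGroup.of 0)) = FreeGroup.of 2
  simp only [sigma, FreeGroup.freeGroupCongr_apply, FreeGroup.map.of]
  decide

lemma phi_s4_inv_of1 : phi s4⁻¹ (FreeGroup.of 1) = FreeGroup.of 3 := by
  have hv : (Multiplicative.toAdd s4⁻¹).val = 2 := by decide
  show (sigma ^ (Multiplicative.toAdd s4⁻¹).val) (FreeGroup.of 1) = FreeGroup.of 3
  rw [hv]
  show sigma (sigma (FreeGroup.of 1)) = FreeGroup.of 3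
  simp only [sigma, FreeGroup.freeGroupCongr_apply, FreeGroup.map.of]
  decide

lemma g0_K {u : FreeGroup (Fin 4)} (hu : u ∈ K) : f (phi s4⁻¹ u) = 1 := by
  have : K ≤ (f.comp (phi s4⁻¹ : MulAut (FreeGroup (Fin 4))).toMonoidHom).ker := by
    rw [K, Subgroup.closure_le]
    rintro v (rfl | rfl) <;>
      simp only [SetLike.mem_coe, MonoidHom.mem_ker, MonoidHom.comp_apply,
        MulEquiv.coe_toMonoidHom, phi_s4_inv_of0, phi_s4_inv_of1] <;>
      simp [f]
  exact this hu

theorem trivial_intersection_rt2 :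
    ∀ r : FreeGroup (Fin 4),
      H₁ ⊓ (H₁.map (MulAut.conj (SemidirectProduct.inl r * t ^ 2)⁻¹).toMonoidHom) = ⊥ := by
  intro r
  have hH : H₁ = K.map SemidirectProduct.inl := by
    rw [H₁, K, MonoidHom.map_closure]
    congr 1
    simp [Set.image_insert_eq, x]
  rw [eq_bot_iff]
  intro g hg
  obtain ⟨hg1, hg2⟩ := Subgroup.mem_inf.mp hg
  rw [hH] at hg1 hg2
  obtain ⟨v, hvK, rfl⟩ := hg1
  obtain ⟨g', hg', heq⟩ := hg2
  obtain ⟨u, huK, rfl⟩ := hg'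
  simp only [MulEquiv.coe_toMonoidHom, MulAut.conj_apply] at heq
  have ht2 : (t : G)^2 = SemidirectProduct.inr s4 := by
    rw [t, ← map_pow]; rfl
  rw [ht2] at heq
  have hleft := congrArg SemidirectProduct.left heq
  simp only [mul_assoc, inv_inv, mul_inv_rev, SemidirectProduct.mul_left,
    SemidirectProduct.inv_left, SemidirectProduct.mul_right, SemidirectProduct.inv_right,
    SemidirectProduct.left_inl, SemidirectProduct.right_inl, SemidirectProduct.left_inr,
    SemidirectProduct.right_inr, map_one, map_inv, map_mul, one_mul, mul_one, inv_one] at hleft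
  -- hleft should express v in terms of phi s4⁻¹ applied to r,u
  have hfv : f v = 1 := by
    rw [← hleft]
    simp only [MulAut.one_apply, ← map_inv phi]
    rw [map_mul, map_mul, map_inv, g0_K huK]
    group
  have : v = 1 := K_inj hvK hfv
  rw [this, map_one]
  exact Subgroup.mem_bot.mpr rfl

end
end
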